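/- Let W = (W_1,...,W_n) be the universal model associated with an admissible free holomorphic function g, and suppose M ⊆ F^2(H_n) ⊗ K is co-invariant under each W_i ⊗ I_K. Then the closed span of {(W_α ⊗ I_K) M : α ∈ F_n^+} equals F^2(H_n) ⊗ closure((P_{C1} ⊗ I_K) M), where P_{C1} is the projection onto the vacuum C·1 (identifying C1 ⊗ K with K). -/

import Mathlib

open scoped InnerProductSpace
open Filter

noncomputable section

/-- Words in the free semigroup `F_n^+`, encoded as lists over `Fin n`. -/
abbrev Word (n : ℕ) := List (Fin n)

/-- The full Fock space tensored with `K`, realized as `ℓ²`-sequences over words with values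
in `K`; for `K = ℂ` this is the full Fock space `F²(H_n)` with orthonormal basis `{e_α}`. -/
abbrev FockK (n : ℕ) (K : Type*) [NormedAddCommGroup K] [InnerProductSpace ℂ K] :=
  lp (fun _ : Word n => K) 2

/-- The finite set of words of length `p`. -/
def wordsLen (n p : ℕ) : Finset (Word n) :=
  (Finset.univ : Finset (List.Vector (Fin n) p)).image List.Vector.toList

variable {n : ℕ} {E : Type*} [NormedAddCommGroup E] [InnerProductSpace ℂ E] [CompleteSpace E]

/-- For a word `α = g_{i₁} ⋯ g_{i_k}`, the operator `X_α = X_{i₁} ⋯ X_{i_k}`. -/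
def wordOp (X : Fin n → (E →L[ℂ] E)) (α : Word n) : E →L[ℂ] E := (α.map X).prod

/-- Partial sums `∑_{p < N} ∑_{|α| = p} a_α X_α X_α^*` of the defect series
`Δ_{g⁻¹}(X, X^*)` associated with the coefficients `a` of `g⁻¹`. -/
def deltaPartial (a : Word n → ℝ) (X : Fin n → (E →L[ℂ] E)) (N : ℕ) : E →L[ℂ] E :=
  ∑ p ∈ Finset.range N, ∑ α ∈ wordsLen n p,
    (a α : ℂ) • (wordOp X α ∘L (wordOp X α).adjoint)

/-!
Let `D` be the closure of the vacuum part of `M`. Because each `W_i` shifts `e_α ⊗ k` to a nonzero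
multiple of `e_{g_i α} ⊗ k`, the vacuum coordinate of `W_β^* x` is a nonzero multiple of the
`β`-coordinate of `x`; so co-invariance puts every coordinate of every `x ∈ M` into `D`, and since
`F²(H_n) ⊗ D` is closed and `W`-invariant it contains the closed cyclic span. Conversely,
`Δ_{g⁻¹}(W, W^*) = P_{ℂ1}` writes `P_{ℂ1} x` as a limit of the vectors `∑ a_α W_α W_α^* x` of the
span, and `W_β P_{ℂ1} x` is a nonzero multiple of `e_β ⊗ x_∅`; hence the closed span contains
every `e_β ⊗ d` with `d ∈ D`, and with them all of `F²(H_n) ⊗ D`.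
-/

open scoped ComplexConjugate

section WordOp

variable {H : Type*} [NormedAddCommGroup H] [InnerProductSpace ℂ H]

theorem wordOp_nil (X : Fin n → (H →L[ℂ] H)) : wordOp X [] = 1 := rfl

theorem wordOp_cons (X : Fin n → (H →L[ℂ] H)) (i : Fin n) (α : Word n) :
    wordOp X (i :: α) = X i ∘L wordOp X α := rfl

theorem wordOp_mem {X : Fin n → (H →L[ℂ] H)} {s : Set H} (hs : ∀ i, ∀ x ∈ s, X i x ∈ s)
    (α : Word n) {x : H} (hx : x ∈ s) : wordOp X α x ∈ s := by
  induction α with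
  | nil => exact hx
  | cons i α ih => exact hs i _ ih

theorem adjoint_wordOp_mem [CompleteSpace H] {X : Fin n → (H →L[ℂ] H)} {s : Set H}
    (hs : ∀ i, ∀ x ∈ s, (X i).adjoint x ∈ s) (α : Word n) {x : H} (hx : x ∈ s) :
    (wordOp X α).adjoint x ∈ s := by
  induction α generalizing x with
  | nil => rwa [wordOp_nil, ContinuousLinearMap.adjoint_one]
  | cons i α ih =>
    rw [wordOp_cons, ContinuousLinearMap.adjoint_comp]
    exact ih (hs i x hx)

theorem apply_mem_topologicalClosure_span_wordOp {X : Fin n → (H →L[ℂ] H)} (s : Set H)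
    (i : Fin n) {x : H}
    (hx : x ∈ (Submodule.span ℂ (⋃ α : Word n, wordOp X α '' s)).topologicalClosure) :
    X i x ∈ (Submodule.span ℂ (⋃ α : Word n, wordOp X α '' s)).topologicalClosure := by
  set S := Submodule.span ℂ (⋃ α : Word n, wordOp X α '' s)
  have hS : S ≤ S.comap (X i : H →ₗ[ℂ] H) := by
    refine Submodule.span_le.2 fun y hy => ?_
    obtain ⟨α, z, hz, rfl⟩ := Set.mem_iUnion.1 hy
    exact Submodule.subset_span (Set.mem_iUnion.2 ⟨i :: α, z, hz, rfl⟩)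
  have hclosed : IsClosed (S.topologicalClosure.comap (X i : H →ₗ[ℂ] H) : Set H) :=
    S.isClosed_topologicalClosure.preimage (X i).continuous
  exact S.topologicalClosure_minimal
    (hS.trans (Submodule.comap_mono S.le_topologicalClosure)) hclosed hx

theorem deltaPartial_mem_span_wordOp [CompleteSpace H] {X : Fin n → (H →L[ℂ] H)}
    {M : Submodule ℂ H} (hco : ∀ i, ∀ x ∈ M, (X i).adjoint x ∈ M) (a : Word n → ℝ) (N : ℕ)
    {x : H} (hx : x ∈ M) :
    deltaPartial a X N x ∈ Submodule.span ℂ (⋃ α : Word n, wordOp X α '' (M : Set H)) := by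
  simp only [deltaPartial, _root_.sum_apply, _root_.smul_apply,
    ContinuousLinearMap.comp_apply]
  refine Submodule.sum_mem _ fun p _ => Submodule.sum_mem _ fun α _ =>
    Submodule.smul_mem _ _ (Submodule.subset_span (Set.mem_iUnion.2 ⟨α, _, ?_, rfl⟩))
  exact adjoint_wordOp_mem hco α hx

end WordOp

section Lp

variable {ι K : Type*} [DecidableEq ι] [NormedAddCommGroup K] [InnerProductSpace ℂ K]

theorem mem_of_forall_single_mem {T : Submodule ℂ (lp (fun _ : ι => K) 2)}
    (hT : IsClosed (T : Set (lp (fun _ : ι => K) 2))) {f : lp (fun _ : ι => K) 2}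
    (hf : ∀ i, lp.single 2 i (f i) ∈ T) : f ∈ T :=
  hT.mem_of_tendsto (lp.hasSum_single ENNReal.ofNat_ne_top f)
    (Eventually.of_forall fun _ => T.sum_mem fun i _ => hf i)

theorem adjoint_apply_of_apply_single [CompleteSpace K]
    {T : lp (fun _ : ι => K) 2 →L[ℂ] lp (fun _ : ι => K) 2} {i j : ι} {c : ℂ}
    (hT : ∀ k, T (lp.single 2 i k) = c • lp.single 2 j k) (x : lp (fun _ : ι => K) 2) :
    T.adjoint x i = conj c • x j := by
  refine ext_inner_left ℂ fun k => ?_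
  calc ⟪k, T.adjoint x i⟫_ℂ = ⟪lp.single 2 i k, T.adjoint x⟫_ℂ :=
        (lp.inner_single_left (G := fun _ : ι => K) i k _).symm
    _ = ⟪T (lp.single 2 i k), x⟫_ℂ := T.adjoint_inner_right _ _
    _ = ⟪k, conj c • x j⟫_ℂ := by
        rw [hT, inner_smul_left, lp.inner_single_left, inner_smul_right]

end Lp

section Fock

variable {K : Type*} [NormedAddCommGroup K] [InnerProductSpace ℂ K]

/-- `F²(H_n) ⊗ D` for a subspace `D ⊆ K`. -/
def fockSubmodule (D : Submodule ℂ K) : Submodule ℂ (FockK n K) where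
  carrier := {f | ∀ β, f β ∈ D}
  add_mem' hf hg β := D.add_mem (hf β) (hg β)
  zero_mem' _ := D.zero_mem
  smul_mem' c _ hf β := D.smul_mem c (hf β)

theorem mem_fockSubmodule {D : Submodule ℂ K} {f : FockK n K} :
    f ∈ fockSubmodule D ↔ ∀ β, f β ∈ D := Iff.rfl

theorem isClosed_fockSubmodule {D : Submodule ℂ K} (hD : IsClosed (D : Set K)) :
    IsClosed (fockSubmodule (n := n) D : Set (FockK n K)) := by
  have : (fockSubmodule (n := n) D : Set (FockK n K)) =
      ⋂ β, lp.evalCLM ℂ (fun _ : Word n => K) 2 β ⁻¹' D := by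
    ext f
    simp [mem_fockSubmodule, lp.evalCLM]
  rw [this]
  exact isClosed_iInter fun β => hD.preimage (lp.evalCLM ℂ _ 2 β).continuous

theorem single_mem_fockSubmodule {D : Submodule ℂ K} (β : Word n) {d : K} (hd : d ∈ D) :
    lp.single 2 β d ∈ fockSubmodule D := fun γ => by
  rw [lp.single_apply, Pi.single_apply]
  split_ifs with h
  · subst h; exact hd
  · exact D.zero_mem

theorem fockSubmodule_topologicalClosure_le {D : Submodule ℂ K} {T : Submodule ℂ (FockK n K)}
    (hT : IsClosed (T : Set (FockK n K))) (hDT : ∀ β, ∀ d ∈ D, lp.single 2 β d ∈ T) :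
    fockSubmodule D.topologicalClosure ≤ T := by
  intro f hf
  refine mem_of_forall_single_mem hT fun β => ?_
  have hsingle : D.topologicalClosure ≤
      T.comap (lp.singleContinuousLinearMap ℂ (fun _ : Word n => K) 2 β : K →ₗ[ℂ] FockK n K) :=
    D.topologicalClosure_minimal (hDT β)
      (hT.preimage (lp.singleContinuousLinearMap ℂ _ 2 β).continuous)
  exact hsingle (hf β)

/-- `(P_{ℂ1} ⊗ I_K) M`, with `ℂ1 ⊗ K` identified with `K`. -/
def vacuumPart (M : Submodule ℂ (FockK n K)) : Submodule ℂ K :=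
  M.map (lp.evalₗ (𝕜 := ℂ) (fun _ : Word n => K) 2 [])

def IsWeightedShift (W : Fin n → (FockK n K →L[ℂ] FockK n K)) : Prop :=
  ∃ w : Fin n → Word n → ℂ, (∀ i α, w i α ≠ 0) ∧
    ∀ i α k, W i (lp.single 2 α k) = w i α • lp.single 2 (i :: α) k

namespace IsWeightedShift

variable {W : Fin n → (FockK n K →L[ℂ] FockK n K)}

theorem exists_wordOp_single_nil (hW : IsWeightedShift W) (β : Word n) :
    ∃ c : ℂ, c ≠ 0 ∧ ∀ k, wordOp W β (lp.single 2 [] k) = c • lp.single 2 β k := by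
  obtain ⟨w, hw0, hw⟩ := hW
  induction β with
  | nil => exact ⟨1, one_ne_zero, fun k => by rw [wordOp_nil, one_smul]; rfl⟩
  | cons i γ ih =>
    obtain ⟨c, hc0, hc⟩ := ih
    refine ⟨c * w i γ, mul_ne_zero hc0 (hw0 i γ), fun k => ?_⟩
    rw [wordOp_cons, ContinuousLinearMap.comp_apply, hc, map_smul, hw, smul_smul]

theorem apply_mem_fockSubmodule (hW : IsWeightedShift W) {D : Submodule ℂ K}
    (hD : IsClosed (D : Set K)) (i : Fin n) {x : FockK n K} (hx : x ∈ fockSubmodule D) :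
    W i x ∈ fockSubmodule D := by
  obtain ⟨w, -, hw⟩ := hW
  refine mem_of_forall_single_mem
    (T := (fockSubmodule D).comap (W i : FockK n K →ₗ[ℂ] FockK n K))
    ((isClosed_fockSubmodule hD).preimage (W i).continuous) fun β => ?_
  simp only [Submodule.mem_comap, ContinuousLinearMap.coe_coe, hw]
  exact Submodule.smul_mem _ _ (single_mem_fockSubmodule _ (hx β))

theorem le_fockSubmodule_of_coinvariant (hW : IsWeightedShift W) [CompleteSpace K]
    {M : Submodule ℂ (FockK n K)} (hco : ∀ i, ∀ x ∈ M, (W i).adjoint x ∈ M) :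
    M ≤ fockSubmodule (vacuumPart M).topologicalClosure := by
  intro x hx β
  obtain ⟨c, hc0, hc⟩ := hW.exists_wordOp_single_nil β
  have hvac : (wordOp W β).adjoint x [] = conj c • x β := adjoint_apply_of_apply_single hc x
  have hmem : (wordOp W β).adjoint x [] ∈ vacuumPart M :=
    ⟨_, adjoint_wordOp_mem (s := (M : Set (FockK n K))) hco β hx, rfl⟩
  rw [← inv_smul_smul₀ ((map_ne_zero (starRingEnd ℂ)).2 hc0) (x β), ← hvac]
  exact Submodule.smul_mem _ _ (Submodule.le_topologicalClosure _ hmem)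

theorem fockSubmodule_vacuumPart_le (hW : IsWeightedShift W) {M : Submodule ℂ (FockK n K)}
    {T : Submodule ℂ (FockK n K)} (hT : IsClosed (T : Set (FockK n K)))
    (hWT : ∀ i, ∀ x ∈ T, W i x ∈ T) (hMT : ∀ x ∈ M, lp.single 2 [] (x []) ∈ T) :
    fockSubmodule (vacuumPart M).topologicalClosure ≤ T := by
  refine fockSubmodule_topologicalClosure_le hT ?_
  rintro β _ ⟨x, hx, rfl⟩
  obtain ⟨c, hc0, hc⟩ := hW.exists_wordOp_single_nil β
  have h := T.smul_mem c⁻¹ (wordOp_mem (s := (T : Set (FockK n K))) hWT β (hMT x hx))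
  rwa [hc, inv_smul_smul₀ hc0] at h

end IsWeightedShift

end Fock

theorem coinvariant_cyclic_span_general
    {n : ℕ} {K : Type*} [NormedAddCommGroup K] [InnerProductSpace ℂ K] [CompleteSpace K]
    (b a : Word n → ℝ) (hb : ∀ α, 0 < b α)
    (W : Fin n → (FockK n K →L[ℂ] FockK n K))
    (hW : ∀ (i : Fin n) (α : Word n) (k : K),
      W i (lp.single 2 α k) =
        ((Real.sqrt (b α / b (i :: α)) : ℝ) : ℂ) • lp.single 2 (i :: α) k)
    (hDelta : ∀ x : FockK n K,
      Tendsto (fun N : ℕ => deltaPartial a W N x) atTop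
        (nhds (lp.single 2 ([] : Word n) ((x : ∀ _ : Word n, K) []))))
    (M : Submodule ℂ (FockK n K))
    (hco : ∀ i : Fin n, ∀ x ∈ M, (W i).adjoint x ∈ M) :
    closure (↑(Submodule.span ℂ
        (⋃ α : Word n, wordOp W α '' (M : Set (FockK n K)))) : Set (FockK n K)) =
      {f : FockK n K | ∀ β : Word n,
        (f : ∀ _ : Word n, K) β ∈
          closure ((fun g : FockK n K => (g : ∀ _ : Word n, K) []) '' (M : Set (FockK n K)))} := by
  have hshift : IsWeightedShift W := ⟨_, fun i α => Complex.ofReal_ne_zero.2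
    (Real.sqrt_ne_zero'.2 (div_pos (hb α) (hb (i :: α)))), hW⟩
  set S := Submodule.span ℂ (⋃ α : Word n, wordOp W α '' (M : Set (FockK n K)))
  set D := (vacuumPart M).topologicalClosure
  have hDclosed : IsClosed (D : Set K) := Submodule.isClosed_topologicalClosure _
  have hSD : S.topologicalClosure ≤ fockSubmodule D := by
    refine S.topologicalClosure_minimal (Submodule.span_le.2 ?_) (isClosed_fockSubmodule hDclosed)
    rintro _ ⟨_, ⟨α, rfl⟩, x, hx, rfl⟩
    exact wordOp_mem (fun i _ => hshift.apply_mem_fockSubmodule hDclosed i) α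
      (hshift.le_fockSubmodule_of_coinvariant hco hx)
  have hDS : fockSubmodule D ≤ S.topologicalClosure :=
    hshift.fockSubmodule_vacuumPart_le S.isClosed_topologicalClosure
      (fun i _ => apply_mem_topologicalClosure_span_wordOp _ i)
      (fun x hx => S.isClosed_topologicalClosure.mem_of_tendsto (hDelta x)
        (Eventually.of_forall fun N =>
          S.le_topologicalClosure (deltaPartial_mem_span_wordOp hco a N hx)))
  rw [← Submodule.topologicalClosure_coe, le_antisymm hSD hDS]
  rfl

/-- If `M ⊆ F²(H_n) ⊗ K` is co-invariant under each `W_i ⊗ I_K`, then the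
closed span of `{(W_α ⊗ I_K) M : α ∈ F_n^+}` equals `F²(H_n) ⊗ closure((P_{ℂ1} ⊗ I_K) M)`,
identifying `ℂ1 ⊗ K` with `K` (so `(P_{ℂ1} ⊗ I_K) M` is the set of vacuum components
`f ↦ f([])` of elements of `M`). -/
theorem coinvariant_cyclic_span
    {n : ℕ} {K : Type*} [NormedAddCommGroup K] [InnerProductSpace ℂ K] [CompleteSpace K]
    (b a : Word n → ℝ) (hb : ∀ α, 0 < b α) (hb0 : b ([] : Word n) = 1)
    (ha0 : a ([] : Word n) = 1)
    (hbd : ∃ C : ℝ, ∀ (i : Fin n) (α : Word n), b α / b (i :: α) ≤ C)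
    (W : Fin n → (FockK n K →L[ℂ] FockK n K))
    (hW : ∀ (i : Fin n) (α : Word n) (k : K),
      W i (lp.single 2 α k) =
        ((Real.sqrt (b α / b (i :: α)) : ℝ) : ℂ) • lp.single 2 (i :: α) k)
    (hDelta : ∀ x : FockK n K,
      Tendsto (fun N : ℕ => deltaPartial a W N x) atTop
        (nhds (lp.single 2 ([] : Word n) ((x : ∀ _ : Word n, K) []))))
    (M : Submodule ℂ (FockK n K)) (hM : IsClosed (M : Set (FockK n K)))
    (hco : ∀ i : Fin n, ∀ x ∈ M, (W i).adjoint x ∈ M) :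
    closure (↑(Submodule.span ℂ
        (⋃ α : Word n, wordOp W α '' (M : Set (FockK n K)))) : Set (FockK n K)) =
      {f : FockK n K | ∀ β : Word n,
        (f : ∀ _ : Word n, K) β ∈
          closure ((fun g : FockK n K => (g : ∀ _ : Word n, K) []) '' (M : Set (FockK n K)))} :=
  coinvariant_cyclic_span_general b a hb W hW hDelta M hco

end
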